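/- arXiv:2504.07204 — 11 statements merged into one kernel-verified Lean document; each statement's English description precedes it below -/
import Mathlib

section
/- A value function approximation upper bounds the value function: if V : 2^N → ℝ≥0 satisfies V(∅)=0, monotonicity (I ⊆ J implies V(I) ≤ V(J)), and for every S ⊆ N and i ∈ S, V(S) - V(S \ ({i} ∪ δ_i)) ≥ w_i, then V(I) ≥ α(I) for every I ⊆ N, where α(I) is the maximum weight of a stable set in the induced subgraph G|_I. -/
open Finset

variable {V : Type*}

/-- The set `S \ ({i} ∪ δ_i)`. -/
def delVtx [Fintype V] [DecidableEq V] (G : SimpleGraph V) [DecidableRel G.Adj]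
    (S : Finset V) (i : V) : Finset V :=
  S \ insert i (G.neighborFinset i)

/-- Maximum weight of a stable set contained in `I`. -/
noncomputable def alphaW [Fintype V] [DecidableEq V] (G : SimpleGraph V) [DecidableRel G.Adj]
    (w : V → ℝ) (I : Finset V) : ℝ := by
  classical
  exact ((I.powerset.filter fun S => ∀ i ∈ S, ∀ j ∈ S, ¬ G.Adj i j).image
      fun S => ∑ i ∈ S, w i).max'
    (Finset.Nonempty.image ⟨∅, Finset.mem_filter.mpr ⟨Finset.empty_mem_powerset I, by simp⟩⟩ _)

/-- `Vfa` is a value function approximation. -/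
def IsVFA [Fintype V] [DecidableEq V] (G : SimpleGraph V) [DecidableRel G.Adj]
    (w : V → ℝ) (Vfa : Finset V → ℝ) : Prop :=
  (∀ S, 0 ≤ Vfa S) ∧ Vfa ∅ = 0 ∧ (∀ I J : Finset V, I ⊆ J → Vfa I ≤ Vfa J) ∧
  ∀ S : Finset V, ∀ i ∈ S, w i ≤ Vfa S - Vfa (delVtx G S i)

lemma key_vfa [Fintype V] [DecidableEq V] (G : SimpleGraph V) [DecidableRel G.Adj]
    (w : V → ℝ) (Vfa : Finset V → ℝ) (hV : IsVFA G w Vfa) :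
    ∀ S I : Finset V, S ⊆ I → (∀ i ∈ S, ∀ j ∈ S, ¬ G.Adj i j) →
      ∑ i ∈ S, w i ≤ Vfa I := by
  intro S
  induction S using Finset.strongInduction with
  | _ S ih =>
    intro I hSI hstab
    rcases S.eq_empty_or_nonempty with rfl | ⟨i, hi⟩
    · simpa using hV.1 I
    · have hiI : i ∈ I := hSI hi
      have hsub : S.erase i ⊆ delVtx G I i := by
        intro j hj
        have hjS := Finset.mem_of_mem_erase hj
        have hjne := Finset.ne_of_mem_erase hj
        simp only [delVtx, Finset.mem_sdiff, Finset.mem_insert,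
          SimpleGraph.mem_neighborFinset]
        exact ⟨hSI hjS, by
          push_neg
          exact ⟨hjne, fun h => hstab i hi j hjS h⟩⟩
      have hrec : ∑ j ∈ S.erase i, w j ≤ Vfa (delVtx G I i) :=
        ih (S.erase i) (Finset.erase_ssubset hi) (delVtx G I i) hsub
          (fun a ha b hb => hstab a (Finset.mem_of_mem_erase ha) b (Finset.mem_of_mem_erase hb))
      have hwi : w i ≤ Vfa I - Vfa (delVtx G I i) := hV.2.2.2 I i hiI
      have := Finset.add_sum_erase S w hi
      calc ∑ j ∈ S, w j = w i + ∑ j ∈ S.erase i, w j := this.symm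
        _ ≤ (Vfa I - Vfa (delVtx G I i)) + Vfa (delVtx G I i) := add_le_add hwi hrec
        _ = Vfa I := by ring

/-- A VFA upper bounds the value function. -/
theorem vfa_ge_alpha [Fintype V] [DecidableEq V] (G : SimpleGraph V) [DecidableRel G.Adj]
    (w : V → ℝ) (hw : ∀ i, 0 < w i) (Vfa : Finset V → ℝ) (hV : IsVFA G w Vfa) :
    ∀ I : Finset V, alphaW G w I ≤ Vfa I := by
  intro I
  apply Finset.max'_le
  intro y hy
  simp only [Finset.mem_image, Finset.mem_filter, Finset.mem_powerset] at hy
  obtain ⟨S, ⟨hSI, hstab⟩, rfl⟩ := hy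
  exact key_vfa G w Vfa hV S I hSI hstab
end

section
/- Sufficient conditions for a VFA: if V : 2^N → ℝ≥0 satisfies (i) V(∅) = 0, (ii) V is monotone, (iii) V({i}) ≥ w_i for all i ∈ N, and (iv) V(I ∪ J) = V(I) + V(J) whenever I and J are disjoint subsets of N with no edge of G between them, then V satisfies V(S) - V(S \ ({i} ∪ δ_i)) ≥ w_i for all S ⊆ N and i ∈ S, i.e., V is a value function approximation. -/
open Finset

variable {V : Type*}

/-- Sufficient conditions for a VFA. -/
theorem vfa_sufficient [Fintype V] [DecidableEq V] (G : SimpleGraph V) [DecidableRel G.Adj]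
    (w : V → ℝ) (hw : ∀ i, 0 < w i) (Vfa : Finset V → ℝ)
    (hnn : ∀ S, 0 ≤ Vfa S)
    (h0 : Vfa ∅ = 0)
    (hmono : ∀ I J : Finset V, I ⊆ J → Vfa I ≤ Vfa J)
    (hsingle : ∀ i : V, w i ≤ Vfa {i})
    (hadd : ∀ I J : Finset V, Disjoint I J → (∀ i ∈ I, ∀ j ∈ J, ¬ G.Adj i j) →
      Vfa (I ∪ J) = Vfa I + Vfa J) :
    ∀ S : Finset V, ∀ i ∈ S, w i ≤ Vfa S - Vfa (delVtx G S i) := by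
  intro S i hi
  set T := delVtx G S i with hT
  have hdisj : Disjoint ({i} : Finset V) T := by
    simp [hT, delVtx, Finset.disjoint_left]
  have hedge : ∀ a ∈ ({i} : Finset V), ∀ j ∈ T, ¬ G.Adj a j := by
    intro a ha j hj
    simp only [Finset.mem_singleton] at ha
    subst ha
    simp only [hT, delVtx, Finset.mem_sdiff, Finset.mem_insert,
      SimpleGraph.mem_neighborFinset, not_or] at hj
    exact hj.2.2
  have hsub : ({i} : Finset V) ∪ T ⊆ S := by
    intro x hx
    rcases Finset.mem_union.mp hx with h | h
    · simp only [Finset.mem_singleton] at h; subst h; exact hi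
    · exact (Finset.mem_sdiff.mp h).1
  have := hadd {i} T hdisj hedge
  have h1 : Vfa ({i} ∪ T) ≤ Vfa S := hmono _ _ hsub
  have h2 := hsingle i
  linarith
end

section
/- If V is a VFA, I ⊆ N, i ∈ I, V(I) = α(I), and V(I) - V(I \ ({i} ∪ δ_i)) > w_i, then i does not belong to any maximum weight stable set of the induced subgraph G|_I. -/
open Finset

variable {V : Type*}

lemma stable_sum_le_vfa [Fintype V] [DecidableEq V] (G : SimpleGraph V) [DecidableRel G.Adj]
    (w : V → ℝ) (Vfa : Finset V → ℝ) (hV : IsVFA G w Vfa) :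
    ∀ S T : Finset V, S ⊆ T → (∀ a ∈ S, ∀ b ∈ S, ¬ G.Adj a b) →
      (∑ a ∈ S, w a) ≤ Vfa T := by
  intro S
  induction S using Finset.induction_on with
  | empty => intro T _ _; simpa [hV.2.1] using hV.1 T
  | insert i S hiS ih =>
    intro T hST hstab
    have hiT : i ∈ T := hST (mem_insert_self i S)
    have h1 : w i ≤ Vfa T - Vfa (delVtx G T i) := hV.2.2.2 T i hiT
    have hsub : S ⊆ delVtx G T i := by
      intro j hj
      have hjT : j ∈ T := hST (mem_insert_of_mem hj)
      have hne : j ≠ i := by rintro rfl; exact hiS hj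
      have hadj : ¬ G.Adj i j :=
        hstab i (mem_insert_self i S) j (mem_insert_of_mem hj)
      simp [delVtx, hjT, hne, SimpleGraph.mem_neighborFinset]
      exact fun h => hadj h
    have h2 : (∑ a ∈ S, w a) ≤ Vfa (delVtx G T i) :=
      ih _ hsub fun a ha b hb => hstab a (mem_insert_of_mem ha) b (mem_insert_of_mem hb)
    rw [Finset.sum_insert hiS]
    linarith

/-- If the VFA gap at `i` is strictly larger than `w i`, then `i` is in no
maximum weight stable set of `G|_I`. -/
theorem not_in_max_stable [Fintype V] [DecidableEq V] (G : SimpleGraph V) [DecidableRel G.Adj]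
    (w : V → ℝ) (hw : ∀ i, 0 < w i) (Vfa : Finset V → ℝ) (hV : IsVFA G w Vfa)
    (I : Finset V) (i : V) (hi : i ∈ I)
    (heq : Vfa I = alphaW G w I)
    (hgt : w i < Vfa I - Vfa (delVtx G I i)) :
    ∀ S : Finset V, S ⊆ I → (∀ a ∈ S, ∀ b ∈ S, ¬ G.Adj a b) →
      (∑ a ∈ S, w a) = alphaW G w I → i ∉ S := by
  intro S hSI hstab hsum hiS
  have hsub : S.erase i ⊆ delVtx G I i := by
    intro j hj
    have hne : j ≠ i := (Finset.mem_erase.mp hj).1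
    have hjS : j ∈ S := (Finset.mem_erase.mp hj).2
    have hadj : ¬ G.Adj i j := hstab i hiS j hjS
    simp [delVtx, hSI hjS, hne, SimpleGraph.mem_neighborFinset]
    exact fun h => hadj h
  have h2 : (∑ a ∈ S.erase i, w a) ≤ Vfa (delVtx G I i) :=
    stable_sum_le_vfa G w Vfa hV _ _ hsub
      (fun a ha b hb => hstab a (Finset.mem_of_mem_erase ha) b (Finset.mem_of_mem_erase hb))
  have h3 : (∑ a ∈ S.erase i, w a) = (∑ a ∈ S, w a) - w i := by
    rw [Finset.sum_erase_eq_sub hiS]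
  rw [h3, hsum, ← heq] at h2
  linarith
end

section
/- If V is a VFA with V(I) = α(I) for some I ⊆ N and i ∈ I satisfies either V(I) - V(I \ ({i} ∪ δ_i)) > w_i or α(I) = α(I \ {i}), then V(I \ {i}) = α(I \ {i}). -/
open Finset

variable {V : Type*}

lemma sum_le_alphaW [Fintype V] [DecidableEq V] (G : SimpleGraph V) [DecidableRel G.Adj]
    (w : V → ℝ) {I S : Finset V} (hS : S ⊆ I) (hstab : ∀ a ∈ S, ∀ b ∈ S, ¬ G.Adj a b) :
    ∑ j ∈ S, w j ≤ alphaW G w I := by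
  apply Finset.le_max'
  exact Finset.mem_image.mpr ⟨S, Finset.mem_filter.mpr ⟨Finset.mem_powerset.mpr hS, hstab⟩, rfl⟩

lemma alphaW_le [Fintype V] [DecidableEq V] (G : SimpleGraph V) [DecidableRel G.Adj]
    (w : V → ℝ) {I : Finset V} {x : ℝ}
    (h : ∀ S ⊆ I, (∀ a ∈ S, ∀ b ∈ S, ¬ G.Adj a b) → ∑ j ∈ S, w j ≤ x) :
    alphaW G w I ≤ x := by
  apply Finset.max'_le
  intro y hy
  obtain ⟨S, hS, rfl⟩ := Finset.mem_image.mp hy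
  obtain ⟨h1, h2⟩ := Finset.mem_filter.mp hS
  exact h S (Finset.mem_powerset.mp h1) h2

lemma sum_le_vfa [Fintype V] [DecidableEq V] (G : SimpleGraph V) [DecidableRel G.Adj]
    (w : V → ℝ) (Vfa : Finset V → ℝ) (hV : IsVFA G w Vfa) :
    ∀ T : Finset V, ∀ S, T ⊆ S → (∀ a ∈ T, ∀ b ∈ T, ¬ G.Adj a b) →
      ∑ j ∈ T, w j ≤ Vfa S := by
  intro T
  induction T using Finset.strongInduction with
  | _ T ih =>
    intro S hTS hstab
    rcases T.eq_empty_or_nonempty with rfl | ⟨j, hj⟩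
    · simpa using hV.1 S
    · have hjS := hTS hj
      have h1 := hV.2.2.2 S j hjS
      have hsub : T.erase j ⊆ delVtx G S j := by
        intro x hx
        have hxT := Finset.mem_of_mem_erase hx
        have hxj := Finset.ne_of_mem_erase hx
        simp only [delVtx, Finset.mem_sdiff, Finset.mem_insert,
          SimpleGraph.mem_neighborFinset]
        exact ⟨hTS hxT, by push_neg; exact ⟨hxj, hstab j hj x hxT⟩⟩
      have ihe := ih (T.erase j) (Finset.erase_ssubset hj) (delVtx G S j) hsub
        (fun a ha b hb => hstab a (Finset.mem_of_mem_erase ha) b (Finset.mem_of_mem_erase hb))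
      have hsum : ∑ x ∈ T, w x = w j + ∑ x ∈ T.erase j, w x :=
        (Finset.add_sum_erase T w hj).symm
      rw [hsum]
      have := hV.2.2.1 -- monotone, unused
      linarith

lemma alphaW_mono [Fintype V] [DecidableEq V] (G : SimpleGraph V) [DecidableRel G.Adj]
    (w : V → ℝ) {I J : Finset V} (h : I ⊆ J) : alphaW G w I ≤ alphaW G w J := by
  apply alphaW_le
  intro S hS hstab
  exact sum_le_alphaW G w (hS.trans h) hstab

lemma alphaW_rec [Fintype V] [DecidableEq V] (G : SimpleGraph V) [DecidableRel G.Adj]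
    (w : V → ℝ) {I : Finset V} (i : V) :
    alphaW G w I ≤ max (alphaW G w (I \ {i})) (w i + alphaW G w (delVtx G I i)) := by
  apply alphaW_le
  intro S hS hstab
  by_cases hiS : i ∈ S
  · refine le_trans ?_ (le_max_right _ _)
    rw [(Finset.add_sum_erase S w hiS).symm]
    have hsub : S.erase i ⊆ delVtx G I i := by
      intro x hx
      simp only [delVtx, Finset.mem_sdiff, Finset.mem_insert,
        SimpleGraph.mem_neighborFinset]
      exact ⟨hS (Finset.mem_of_mem_erase hx), by
        push_neg
        exact ⟨Finset.ne_of_mem_erase hx, hstab i hiS x (Finset.mem_of_mem_erase hx)⟩⟩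
    have := sum_le_alphaW G w hsub
      (fun a ha b hb => hstab a (Finset.mem_of_mem_erase ha) b (Finset.mem_of_mem_erase hb))
    linarith
  · refine le_trans ?_ (le_max_left _ _)
    apply sum_le_alphaW G w ?_ hstab
    intro x hx
    rw [Finset.mem_sdiff, Finset.mem_singleton]
    exact ⟨hS hx, fun h => hiS (h ▸ hx)⟩

/-- Deleting such a vertex `i` preserves the equality `V = α`. -/
theorem vfa_eq_alpha_erase [Fintype V] [DecidableEq V] (G : SimpleGraph V) [DecidableRel G.Adj]
    (w : V → ℝ) (hw : ∀ i, 0 < w i) (Vfa : Finset V → ℝ) (hV : IsVFA G w Vfa)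
    (I : Finset V) (i : V) (hi : i ∈ I)
    (heq : Vfa I = alphaW G w I)
    (hyp : w i < Vfa I - Vfa (delVtx G I i) ∨ alphaW G w I = alphaW G w (I \ {i})) :
    Vfa (I \ {i}) = alphaW G w (I \ {i}) := by
  have hge : alphaW G w (I \ {i}) ≤ Vfa (I \ {i}) := by
    apply alphaW_le
    intro S hS hstab
    exact sum_le_vfa G w Vfa hV S (I \ {i}) hS hstab
  have hmonoV : Vfa (I \ {i}) ≤ Vfa I := hV.2.2.1 _ _ (Finset.sdiff_subset)
  have key : alphaW G w I = alphaW G w (I \ {i}) := by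
    rcases hyp with h | h
    · -- w i + α(del) ≤ w i + V(del) < V I = α I ≤ max
      have hdel : alphaW G w (delVtx G I i) ≤ Vfa (delVtx G I i) := by
        apply alphaW_le
        intro S hS hstab
        exact sum_le_vfa G w Vfa hV S _ hS hstab
      have hrec := alphaW_rec G w (I := I) i
      have hmono := alphaW_mono G w (I := I \ {i}) (J := I) Finset.sdiff_subset
      rcases le_or_gt (alphaW G w I) (alphaW G w (I \ {i})) with h' | h'
      · linarith
      · exfalso
        have : alphaW G w I ≤ w i + alphaW G w (delVtx G I i) := by
          rcases le_max_iff.mp hrec with h2 | h2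
          · linarith
          · exact h2
        linarith
    · exact h
  linarith
end

section
/- The LP-dual clique VFA is a VFA: given μ : C(G) → ℝ≥0 satisfying Σ_{C ∋ i} μ_C ≥ w_i for every vertex i, the function V_LP(S) := Σ_{C ∈ C(G), C ∩ S ≠ ∅} μ_C (with V_LP(∅) := 0) satisfies: V_LP(∅) = 0, V_LP is monotone, V_LP({i}) ≥ w_i for all i, and V_LP(I ∪ J) = V_LP(I) + V_LP(J) whenever I, J are disjoint with no edge between them; hence V_LP(S) - V_LP(S \ ({i} ∪ δ_i)) ≥ w_i for all S and i ∈ S. -/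
open Finset

variable {V : Type*}

open scoped Classical in
/-- The LP clique VFA. -/
noncomputable def VLP [Fintype V] [DecidableEq V] (G : SimpleGraph V)
    (μ : Finset V → ℝ) (S : Finset V) : ℝ :=
  ∑ C ∈ Finset.univ.filter (fun C : Finset V => G.IsClique (C : Set V) ∧ (C ∩ S).Nonempty), μ C

open scoped Classical in
/-- The LP-dual clique VFA is a VFA. -/
theorem VLP_isVFA [Fintype V] [DecidableEq V] (G : SimpleGraph V) [DecidableRel G.Adj]
    (w : V → ℝ) (hw : ∀ i, 0 < w i)
    (μ : Finset V → ℝ) (hμ : ∀ C, 0 ≤ μ C)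
    (hfeas : ∀ i : V, w i ≤
      ∑ C ∈ Finset.univ.filter (fun C : Finset V => G.IsClique (C : Set V) ∧ i ∈ C), μ C) :
    VLP G μ ∅ = 0 ∧
    (∀ I J : Finset V, I ⊆ J → VLP G μ I ≤ VLP G μ J) ∧
    (∀ i : V, w i ≤ VLP G μ {i}) ∧
    (∀ I J : Finset V, Disjoint I J → (∀ i ∈ I, ∀ j ∈ J, ¬ G.Adj i j) →
      VLP G μ (I ∪ J) = VLP G μ I + VLP G μ J) ∧
    (∀ S : Finset V, ∀ i ∈ S, w i ≤ VLP G μ S - VLP G μ (delVtx G S i)) := by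

  classical
  have h0 : VLP G μ ∅ = 0 := by
    unfold VLP
    apply Finset.sum_eq_zero
    intro C hC
    simp only [Finset.mem_filter, Finset.inter_empty, Finset.not_nonempty_empty,
      and_false] at hC
  have hmono : ∀ I J : Finset V, I ⊆ J → VLP G μ I ≤ VLP G μ J := by
    intro I J hIJ
    apply Finset.sum_le_sum_of_subset_of_nonneg
    · intro C hC
      simp only [Finset.mem_filter, Finset.mem_univ, true_and] at *
      obtain ⟨hcl, x, hx⟩ := hC
      rw [Finset.mem_inter] at hx
      exact ⟨hcl, ⟨x, Finset.mem_inter.mpr ⟨hx.1, hIJ hx.2⟩⟩⟩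
    · intro C _ _
      exact hμ C
  have hsingle : ∀ i : V, w i ≤ VLP G μ {i} := by
    intro i
    refine (hfeas i).trans (le_of_eq ?_)
    unfold VLP
    rw [Finset.sum_filter, Finset.sum_filter]
    refine Finset.sum_congr rfl fun C _ => ?_
    by_cases hcl : G.IsClique (C : Set V)
    · by_cases hi : i ∈ C
      · have h2 : (C ∩ ({i} : Finset V)).Nonempty :=
          ⟨i, Finset.mem_inter.mpr ⟨hi, Finset.mem_singleton_self i⟩⟩
        simp [hcl, hi, h2]
      · have h2 : ¬ (C ∩ ({i} : Finset V)).Nonempty := by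
          rintro ⟨x, hx⟩
          rw [Finset.mem_inter, Finset.mem_singleton] at hx
          exact hi (hx.2 ▸ hx.1)
        simp [hcl, hi, h2]
    · simp [hcl]
  have hadd : ∀ I J : Finset V, Disjoint I J → (∀ i ∈ I, ∀ j ∈ J, ¬ G.Adj i j) →
      VLP G μ (I ∪ J) = VLP G μ I + VLP G μ J := by
    intro I J hdisj hnoadj
    unfold VLP
    rw [Finset.sum_filter, Finset.sum_filter, Finset.sum_filter, ← Finset.sum_add_distrib]
    refine Finset.sum_congr rfl fun C _ => ?_
    by_cases hcl : G.IsClique (C : Set V)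
    · by_cases hI : (C ∩ I).Nonempty <;> by_cases hJ : (C ∩ J).Nonempty
      · exfalso
        obtain ⟨x, hx⟩ := hI
        obtain ⟨y, hy⟩ := hJ
        rw [Finset.mem_inter] at hx hy
        have hxy : x ≠ y := fun h => Finset.disjoint_left.mp hdisj hx.2 (h ▸ hy.2)
        exact hnoadj x hx.2 y hy.2 (hcl hx.1 hy.1 hxy)
      · have hU : (C ∩ (I ∪ J)).Nonempty := by
          obtain ⟨x, hx⟩ := hI
          rw [Finset.mem_inter] at hx
          exact ⟨x, Finset.mem_inter.mpr ⟨hx.1, Finset.mem_union_left _ hx.2⟩⟩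
        simp [hcl, hI, hJ, hU]
      · have hU : (C ∩ (I ∪ J)).Nonempty := by
          obtain ⟨x, hx⟩ := hJ
          rw [Finset.mem_inter] at hx
          exact ⟨x, Finset.mem_inter.mpr ⟨hx.1, Finset.mem_union_right _ hx.2⟩⟩
        simp [hcl, hI, hJ, hU]
      · have hU : ¬ (C ∩ (I ∪ J)).Nonempty := by
          rintro ⟨x, hx⟩
          rw [Finset.mem_inter, Finset.mem_union] at hx
          rcases hx.2 with h | h
          · exact hI ⟨x, Finset.mem_inter.mpr ⟨hx.1, h⟩⟩
          · exact hJ ⟨x, Finset.mem_inter.mpr ⟨hx.1, h⟩⟩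
        simp [hcl, hI, hJ, hU]
    · simp [hcl]
  refine ⟨h0, hmono, hsingle, hadd, ?_⟩
  intro S i hiS
  set T := delVtx G S i with hT
  have hiT : i ∉ T := by
    simp [hT, delVtx]
  have hsub : T ∪ {i} ⊆ S := by
    intro x hx
    rcases Finset.mem_union.mp hx with h | h
    · exact (Finset.mem_sdiff.mp h).1
    · rw [Finset.mem_singleton] at h; exact h ▸ hiS
  have hdisj : Disjoint T ({i} : Finset V) := by
    simp [Finset.disjoint_singleton_right, hiT]
  have hnoadj : ∀ a ∈ T, ∀ b ∈ ({i} : Finset V), ¬ G.Adj a b := by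
    intro a ha b hb hab
    rw [Finset.mem_singleton] at hb
    subst hb
    have := (Finset.mem_sdiff.mp ha).2
    exact this (Finset.mem_insert_of_mem (by
      rw [SimpleGraph.mem_neighborFinset]; exact hab.symm))
  have := hadd T {i} hdisj hnoadj
  have h2 : VLP G μ (T ∪ {i}) ≤ VLP G μ S := hmono _ _ hsub
  have h3 := hsingle i
  linarith
end

section
/- If q ∈ ℝ^S lies in the range of a positive semidefinite matrix Q ∈ 𝕊^S_+, then (q^⊤ Q^† q) · Q ⪰ q q^⊤, i.e., the matrix (q^⊤ Q^† q) Q - q q^⊤ is positive semidefinite. -/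
open Matrix

/-- The four Penrose conditions characterizing the Moore–Penrose pseudo-inverse. -/
def IsMoorePenrose {m : Type*} [Fintype m] [DecidableEq m] (Q P : Matrix m m ℝ) : Prop :=
  Q * P * Q = Q ∧ P * Q * P = P ∧ (Q * P)ᵀ = Q * P ∧ (P * Q)ᵀ = P * Q

/-- The bordered matrix `[[t, qᵀ], [q, Q]]`. -/
def bordered {m : Type*} (t : ℝ) (q : m → ℝ) (Q : Matrix m m ℝ) :
    Matrix (Unit ⊕ m) (Unit ⊕ m) ℝ :=
  Matrix.fromBlocks (Matrix.of fun (_ : Unit) (_ : Unit) => t)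
    (Matrix.of fun (_ : Unit) j => q j) (Matrix.of fun i (_ : Unit) => q i) Q

/-- `(qᵀ Q† q) • Q ⪰ q qᵀ`. -/
theorem pinv_quadform_smul_posSemidef {S : Type*} [Fintype S] [DecidableEq S]
    (Q : Matrix S S ℝ) (hQ : Q.PosSemidef) (q : S → ℝ) (hq : ∃ y, Q.mulVec y = q)
    (Qd : Matrix S S ℝ) (hQd : IsMoorePenrose Q Qd) :
    ((q ⬝ᵥ Qd.mulVec q) • Q - Matrix.vecMulVec q q).PosSemidef := by
  obtain ⟨y, hy⟩ := hq
  obtain ⟨h1, _, _, _⟩ := hQd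
  have hQsym : Qᵀ = Q := hQ.1
  open scoped MatrixOrder in set R := CFC.sqrt Q with hRdef
  open scoped MatrixOrder in have hRR : R * R = Q := CFC.sqrt_mul_sqrt_self Q hQ.nonneg
  open scoped MatrixOrder in have hRsym : Rᵀ = R := (CFC.sqrt_nonneg Q).posSemidef.1
  have hQw : ∀ w, (Q.mulVec y) ⬝ᵥ w = y ⬝ᵥ (Q.mulVec w) := fun w => by
    rw [dotProduct_mulVec, ← mulVec_transpose, hQsym]
  have hc : q ⬝ᵥ Qd.mulVec q = y ⬝ᵥ Q.mulVec y := by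
    rw [← hy, hQw, show Q.mulVec (Qd.mulVec (Q.mulVec y)) = (Q * Qd * Q).mulVec y by
      simp [mulVec_mulVec, Matrix.mul_assoc], h1]
  refine posSemidef_iff_dotProduct_mulVec.mpr ⟨?_, ?_⟩
  · have h5 : ((q ⬝ᵥ Qd.mulVec q) • Q).IsHermitian := by
      unfold Matrix.IsHermitian
      rw [Matrix.conjTranspose_smul, hQ.1, star_trivial]
    have h6 : (Matrix.vecMulVec q q).IsHermitian := by
      ext i j
      simp [Matrix.conjTranspose_apply, vecMulVec_apply, mul_comm]
    exact h5.sub h6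
  · intro x
    have hx : ∀ v : S → ℝ, star v = v := fun v => by simp
    have key : (q ⬝ᵥ x) ^ 2 ≤ (y ⬝ᵥ Q.mulVec y) * (x ⬝ᵥ Q.mulVec x) := by
      have e1 : ∀ u v : S → ℝ, u ⬝ᵥ Q.mulVec v = (R.mulVec u) ⬝ᵥ (R.mulVec v) := by
        intro u v
        rw [← hRR, ← mulVec_mulVec, dotProduct_mulVec, ← mulVec_transpose, hRsym]
      have e2 : q ⬝ᵥ x = (R.mulVec y) ⬝ᵥ (R.mulVec x) := by
        rw [← hy, hQw, e1]
      rw [e1 y y, e1 x x, e2]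
      calc (R.mulVec y ⬝ᵥ R.mulVec x) ^ 2
          ≤ (∑ i, R.mulVec y i ^ 2) * ∑ i, R.mulVec x i ^ 2 :=
            Finset.sum_mul_sq_le_sq_mul_sq _ _ _
        _ = _ := by simp [dotProduct, sq]
    have := sub_nonneg.mpr key
    simp only [sub_mulVec, smul_mulVec, dotProduct_sub, dotProduct_smul, hx, smul_eq_mul]
    rw [hc]
    have hv : x ⬝ᵥ (Matrix.vecMulVec q q).mulVec x = (q ⬝ᵥ x) ^ 2 := by
      simp only [mulVec, vecMulVec_apply, dotProduct, Finset.mul_sum, Finset.sum_mul, sq]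
      rw [Finset.sum_comm]
      congr 1; ext i; congr 1; ext j; ring
    rw [hv]
    linarith [key]
end

section
/- Given Q ∈ 𝕊^n_+ and q ∈ ℝ^n, there exists φ > 0 with φ · q q^⊤ ⪯ Q if and only if q lies in the range of Q. -/
open Matrix

/-- Quadratic form of a rank-one matrix. -/
lemma dot_vecMulVec {n : Type*} [Fintype n] (q v : n → ℝ) :
    v ⬝ᵥ (Matrix.vecMulVec q q) *ᵥ v = (q ⬝ᵥ v) ^ 2 := by
  have h : (Matrix.vecMulVec q q) *ᵥ v = (q ⬝ᵥ v) • q := by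
    ext i
    simp only [Matrix.mulVec, Matrix.vecMulVec_apply, dotProduct, Pi.smul_apply, smul_eq_mul,
      Finset.mul_sum]
    rw [Finset.sum_mul]
    congr 1; ext j; ring
  rw [h, dotProduct_smul, smul_eq_mul, dotProduct_comm, sq]

/-- Cauchy–Schwarz for a positive semidefinite real matrix. -/
lemma psd_cauchy_schwarz {n : Type*} [Fintype n] (Q : Matrix n n ℝ) (hQ : Q.PosSemidef)
    (x y : n → ℝ) : (x ⬝ᵥ Q *ᵥ y) ^ 2 ≤ (x ⬝ᵥ Q *ᵥ x) * (y ⬝ᵥ Q *ᵥ y) := by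
  have hsymm : Qᵀ = Q := by
    rw [← Q.conjTranspose_eq_transpose_of_trivial]; exact hQ.1
  have hsw : ∀ a b : n → ℝ, a ⬝ᵥ Q *ᵥ b = b ⬝ᵥ Q *ᵥ a := by
    intro a b
    rw [dotProduct_mulVec, ← vecMul_transpose, hsymm, dotProduct_comm]
  have key : ∀ t : ℝ, 0 ≤ (y ⬝ᵥ Q *ᵥ y) * (t * t) + (2 * (x ⬝ᵥ Q *ᵥ y)) * t + (x ⬝ᵥ Q *ᵥ x) := by
    intro t
    have h := hQ.dotProduct_mulVec_nonneg (x + t • y)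
    simp only [star_trivial, mulVec_add, mulVec_smul, dotProduct_add, add_dotProduct,
      dotProduct_smul, smul_dotProduct, smul_eq_mul] at h
    rw [hsw y x] at h
    ring_nf at h ⊢
    linarith
  have := discrim_le_zero key
  rw [discrim] at this
  nlinarith [this]

/-- For a self-adjoint operator on a finite-dimensional real inner product space `EuclideanSpace`,
the range is the orthogonal complement of the kernel. -/
lemma range_eq_orthogonal_ker {n : Type*} [Fintype n]
    (T : EuclideanSpace ℝ n →ₗ[ℝ] EuclideanSpace ℝ n)
    (hT : LinearMap.adjoint T = T) :
    LinearMap.range T = (LinearMap.ker T)ᗮ := by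
  have hle : LinearMap.range T ≤ (LinearMap.ker T)ᗮ := by
    rintro _ ⟨x, rfl⟩
    rw [Submodule.mem_orthogonal]
    intro u hu
    rw [LinearMap.mem_ker] at hu
    rw [← hT, LinearMap.adjoint_inner_right, hu, inner_zero_left]
  refine Submodule.eq_of_le_of_finrank_eq hle ?_
  have h1 := LinearMap.finrank_range_add_finrank_ker T
  have h2 := Submodule.finrank_add_finrank_orthogonal (K := LinearMap.ker T)
  omega

/-- There is `φ > 0` with `φ q qᵀ ⪯ Q` iff `q` lies in the range of `Q`. -/
theorem exists_smul_vecMulVec_le_iff_mem_range {n : Type*} [Fintype n] [DecidableEq n]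
    (Q : Matrix n n ℝ) (hQ : Q.PosSemidef) (q : n → ℝ) :
    (∃ φ : ℝ, 0 < φ ∧ (Q - φ • Matrix.vecMulVec q q).PosSemidef) ↔
      ∃ y, Q.mulVec y = q := by
  have hsymm : Qᵀ = Q := by
    rw [← Q.conjTranspose_eq_transpose_of_trivial]; exact hQ.1
  have hsw : ∀ a b : n → ℝ, a ⬝ᵥ Q *ᵥ b = b ⬝ᵥ Q *ᵥ a := by
    intro a b
    rw [dotProduct_mulVec, ← vecMul_transpose, hsymm, dotProduct_comm]
  constructor
  · rintro ⟨φ, hφ, hpsd⟩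
    set T := Matrix.toEuclideanLin Q with hT
    have hadj : LinearMap.adjoint T = T := by
      rw [hT, ← Matrix.toEuclideanLin_conjTranspose_eq_adjoint, hQ.1]
    have hq : (WithLp.equiv 2 (n → ℝ)).symm q ∈ (LinearMap.ker T)ᗮ := by
      rw [Submodule.mem_orthogonal]
      intro u hu
      rw [LinearMap.mem_ker] at hu
      set k : n → ℝ := WithLp.equiv 2 (n → ℝ) u with hk
      have hker : Q *ᵥ k = 0 := by
        have := congrArg (WithLp.equiv 2 (n → ℝ)) hu
        rw [WithLp.equiv_apply, Matrix.ofLp_toEuclideanLin_apply] at this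
        simpa [hk] using this
      have h := hpsd.dotProduct_mulVec_nonneg k
      rw [star_trivial, sub_mulVec, dotProduct_sub, hker, dotProduct_zero] at h
      have hvmv : k ⬝ᵥ (φ • Matrix.vecMulVec q q) *ᵥ k = φ * (q ⬝ᵥ k) ^ 2 := by
        rw [Matrix.smul_mulVec, dotProduct_smul, smul_eq_mul, dot_vecMulVec]
      rw [hvmv] at h
      have hqk : q ⬝ᵥ k = 0 := by
        have h2 : (q ⬝ᵥ k) ^ 2 = 0 := by nlinarith [sq_nonneg (q ⬝ᵥ k)]
        exact sq_eq_zero_iff.mp h2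
      have : (inner ℝ u ((WithLp.equiv 2 (n → ℝ)).symm q) : ℝ) = k ⬝ᵥ q := by
        simp only [PiLp.inner_apply, RCLike.inner_apply, starRingEnd_apply, star_trivial]
        rw [dotProduct_comm]; rfl
      rw [this, dotProduct_comm, hqk]
    rw [← range_eq_orthogonal_ker T hadj] at hq
    obtain ⟨x, hx⟩ := hq
    refine ⟨WithLp.equiv 2 (n → ℝ) x, ?_⟩
    have := congrArg (WithLp.equiv 2 (n → ℝ)) hx
    rwa [WithLp.equiv_apply, Matrix.ofLp_toEuclideanLin_apply, Equiv.apply_symm_apply] at this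
  · rintro ⟨y, hy⟩
    have hyq : 0 ≤ y ⬝ᵥ q := by
      have := hQ.dotProduct_mulVec_nonneg y
      rwa [star_trivial, hy] at this
    refine ⟨(1 + y ⬝ᵥ q)⁻¹, by positivity, ?_⟩
    refine Matrix.PosSemidef.of_dotProduct_mulVec_nonneg ?_ ?_
    · -- Hermitian
      have h1 : (Matrix.vecMulVec q q)ᴴ = Matrix.vecMulVec q q := by
        ext i j
        simp [Matrix.conjTranspose_apply, Matrix.vecMulVec_apply, mul_comm]
      show (Q - (1 + y ⬝ᵥ q)⁻¹ • Matrix.vecMulVec q q)ᴴ = _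
      rw [Matrix.conjTranspose_sub, hQ.1, Matrix.conjTranspose_smul, h1, star_trivial]
    · intro x
      rw [star_trivial, sub_mulVec, dotProduct_sub]
      have hvmv : x ⬝ᵥ ((1 + y ⬝ᵥ q)⁻¹ • Matrix.vecMulVec q q) *ᵥ x
          = (1 + y ⬝ᵥ q)⁻¹ * (q ⬝ᵥ x) ^ 2 := by
        rw [Matrix.smul_mulVec, dotProduct_smul, smul_eq_mul, dot_vecMulVec]
      rw [hvmv]
      have hqx : q ⬝ᵥ x = y ⬝ᵥ Q *ᵥ x := by
        rw [← hy, dotProduct_comm, hsw]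
      have hcs := psd_cauchy_schwarz Q hQ y x
      have hyy : y ⬝ᵥ Q *ᵥ y = y ⬝ᵥ q := by rw [hy]
      have hxx : 0 ≤ x ⬝ᵥ Q *ᵥ x := by have := hQ.dotProduct_mulVec_nonneg x; rwa [star_trivial] at this
      rw [hqx]
      rw [hyy] at hcs
      have hpos : (0:ℝ) < 1 + y ⬝ᵥ q := by linarith
      rw [sub_nonneg, inv_mul_le_iff₀ hpos]
      nlinarith [hcs, hxx, hyq]
end

section
/- The SDP VFA is monotone: let q ∈ ℝ^N, Q ∈ 𝕊^N_+ be such that the bordered matrix [[t, q^⊤], [q, Q]] is positive semidefinite for some t, and define V_SDP(S) := q_S^⊤ Q_S^† q_S for nonempty S ⊆ N (and V_SDP(∅) := 0), where q_S, Q_S are the restrictions to S. Then I ⊆ J implies V_SDP(I) ≤ V_SDP(J). -/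
open Matrix

/-- Restriction of `q` to a finite subset. -/
def restr {N : Type*} (q : N → ℝ) (S : Finset N) : S → ℝ := fun i => q i.1

/-- Principal submatrix of `Q` indexed by a finite subset. -/
def subm {N : Type*} (Q : Matrix N N ℝ) (S : Finset N) : Matrix S S ℝ :=
  Q.submatrix Subtype.val Subtype.val

/-- Key lemma A: if the bordered matrix is PSD and `P` is a Moore–Penrose pseudo-inverse of `Q`,
then `q` is in the range of `Q`, witnessed by `P *ᵥ q`. -/
lemma keyA {m : Type*} [Fintype m] [DecidableEq m] (t : ℝ) (q : m → ℝ)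
    (Q : Matrix m m ℝ) (hPSD : (bordered t q Q).PosSemidef)
    (P : Matrix m m ℝ) (hP : IsMoorePenrose Q P) :
    Q *ᵥ (P *ᵥ q) = q := by
  obtain ⟨h1, _h2, h3, _h4⟩ := hP
  set x : m → ℝ := q - (Q * P) *ᵥ q with hx
  -- x ᵥ* Q = 0
  have hxQ : x ᵥ* Q = 0 := by
    have : ((Q * P) *ᵥ q) ᵥ* Q = q ᵥ* Q := by
      rw [vecMul_mulVec, ← transpose_transpose (Q * P), h3, transpose_transpose, h1]
    rw [hx, sub_vecMul, this, sub_self]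
  -- x ⬝ᵥ Q *ᵥ x = 0
  have hxQx : x ⬝ᵥ Q *ᵥ x = 0 := by
    rw [dotProduct_mulVec, hxQ, zero_dotProduct]
  -- q ⬝ᵥ x = x ⬝ᵥ x
  have hqx : q ⬝ᵥ x = x ⬝ᵥ x := by
    have h0 : ((Q * P) *ᵥ q) ⬝ᵥ x = 0 := by
      rw [dotProduct_comm, dotProduct_mulVec, ← vecMul_vecMul, hxQ, zero_vecMul,
        zero_dotProduct]
    calc q ⬝ᵥ x = (q - (Q * P) *ᵥ q) ⬝ᵥ x + ((Q * P) *ᵥ q) ⬝ᵥ x := by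
          rw [sub_dotProduct]; ring
      _ = x ⬝ᵥ x := by rw [← hx, h0, add_zero]
  -- quadratic form evaluation
  have hquad : ∀ s : ℝ, 0 ≤ t * s ^ 2 + 2 * s * (q ⬝ᵥ x) := by
    intro s
    have := hPSD.dotProduct_mulVec_nonneg (Sum.elim (fun _ : Unit => s) x)
    rw [star_trivial] at this
    unfold bordered at this
    rw [fromBlocks_mulVec] at this
    simp only [Sum.elim_comp_inl, Sum.elim_comp_inr] at this
    rw [sumElim_dotProduct_sumElim] at this
    have e1 : ∀ u : Unit, ((Matrix.of fun (_ : Unit) (_ : Unit) => t) *ᵥ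
        (fun _ : Unit => s) + (Matrix.of fun (_ : Unit) j => q j) *ᵥ x) u
        = t * s + q ⬝ᵥ x := by
      intro u
      simp [mulVec, dotProduct]
    have e2 : ((Matrix.of fun i (_ : Unit) => q i) *ᵥ (fun _ : Unit => s) + Q *ᵥ x)
        = fun i => q i * s + (Q *ᵥ x) i := by
      funext i
      simp [mulVec, dotProduct]
    rw [e2] at this
    have e3 : (fun _ : Unit => s) ⬝ᵥ (((Matrix.of fun (_ : Unit) (_ : Unit) => t) *ᵥ
        (fun _ : Unit => s)) + (Matrix.of fun (_ : Unit) j => q j) *ᵥ x)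
        = s * (t * s + q ⬝ᵥ x) := by
      rw [dotProduct]
      simp [e1 ()]
    rw [e3] at this
    have e4 : x ⬝ᵥ (fun i => q i * s + (Q *ᵥ x) i) = s * (x ⬝ᵥ q) + x ⬝ᵥ (Q *ᵥ x) := by
      simp only [dotProduct, mul_add, Finset.sum_add_distrib, Finset.mul_sum]
      congr 1
      exact Finset.sum_congr rfl fun i _ => by ring
    rw [e4, hxQx, add_zero] at this
    have hcomm : x ⬝ᵥ q = q ⬝ᵥ x := dotProduct_comm _ _
    rw [hcomm] at this
    nlinarith [this]
  -- t ≥ 0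
  have ht : 0 ≤ t := by
    have := hquad 0
    have h1' := hquad 1
    have h2' := hquad (-1)
    nlinarith
  -- conclude q ⬝ᵥ x = 0
  have hc0 : q ⬝ᵥ x = 0 := by
    have htpos : 0 < t + 1 := by linarith
    set s := (q ⬝ᵥ x) / (t + 1) with hs
    have hsc : (t + 1) * s = q ⬝ᵥ x := by
      rw [hs]; field_simp
    have hq2 := hquad (-s)
    rw [← hsc] at hq2
    have hs2 : s ^ 2 ≤ 0 := by nlinarith [mul_nonneg ht (sq_nonneg s), sq_nonneg s]
    have hszero : s = 0 := sq_eq_zero_iff.mp (le_antisymm hs2 (sq_nonneg s))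
    rw [← hsc, hszero, mul_zero]
  have hxx : x ⬝ᵥ x = 0 := by rw [← hqx]; exact hc0
  have hx0 : x = 0 := dotProduct_self_eq_zero.mp hxx
  have : q = (Q * P) *ᵥ q := by
    have := sub_eq_zero.mp hx0
    exact this
  rw [mulVec_mulVec]
  exact this.symm

/-- Key lemma B: the quadratic lower bound on `q ⬝ᵥ P *ᵥ q`. -/
lemma keyB {m : Type*} [Fintype m] [DecidableEq m] (q : m → ℝ)
    (Q : Matrix m m ℝ) (hQ : Q.PosSemidef) (P : Matrix m m ℝ)
    (hq : Q *ᵥ (P *ᵥ q) = q) (y : m → ℝ) :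
    2 * (q ⬝ᵥ y) - y ⬝ᵥ Q *ᵥ y ≤ q ⬝ᵥ (P *ᵥ q) := by
  set p : m → ℝ := P *ᵥ q with hp
  have hsym : Qᵀ = Q := hQ.1
  have h0 : 0 ≤ (p - y) ⬝ᵥ Q *ᵥ (p - y) := by
    have := hQ.dotProduct_mulVec_nonneg (p - y)
    rwa [star_trivial] at this
  have hpQp : p ⬝ᵥ Q *ᵥ p = q ⬝ᵥ p := by
    rw [hq, dotProduct_comm]
  have hpQy : p ⬝ᵥ Q *ᵥ y = q ⬝ᵥ y := by
    rw [dotProduct_mulVec, ← hsym, vecMul_transpose, hq]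
  have hyQp : y ⬝ᵥ Q *ᵥ p = y ⬝ᵥ q := by rw [hq]
  rw [mulVec_sub, dotProduct_sub, sub_dotProduct, sub_dotProduct, hpQp, hpQy, hyQp] at h0
  have hcomm : y ⬝ᵥ q = q ⬝ᵥ y := dotProduct_comm _ _
  linarith

/-- The SDP VFA `V_SDP(S) = q_Sᵀ Q_S† q_S` is monotone. -/
theorem VSDP_monotone {N : Type*} [Fintype N] [DecidableEq N]
    (q : N → ℝ) (Q : Matrix N N ℝ) (t : ℝ)
    (hPSD : (bordered t q Q).PosSemidef)
    (Qd : (S : Finset N) → Matrix S S ℝ)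
    (hQd : ∀ S : Finset N, IsMoorePenrose (subm Q S) (Qd S)) :
    ∀ I J : Finset N, I ⊆ J →
      restr q I ⬝ᵥ (Qd I).mulVec (restr q I) ≤ restr q J ⬝ᵥ (Qd J).mulVec (restr q J) := by
  intro I J hIJ
  -- restricted bordered matrices are PSD
  have hb : ∀ S : Finset N, (bordered t (restr q S) (subm Q S)).PosSemidef := by
    intro S
    have he : bordered t (restr q S) (subm Q S)
        = (bordered t q Q).submatrix (Sum.map id Subtype.val) (Sum.map id Subtype.val) := by
      ext i j
      rcases i with i | i <;> rcases j with j | j <;> rfl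
    rw [he]
    exact hPSD.submatrix _
  have hQS : ∀ S : Finset N, (subm Q S).PosSemidef := by
    intro S
    have he : subm Q S = (bordered t q Q).submatrix
        (fun i : S => Sum.inr i.1) (fun i : S => Sum.inr i.1) := by
      ext i j; rfl
    rw [he]
    exact hPSD.submatrix _
  have hAI : subm Q I *ᵥ (Qd I *ᵥ restr q I) = restr q I := keyA t _ _ (hb I) _ (hQd I)
  have hAJ : subm Q J *ᵥ (Qd J *ᵥ restr q J) = restr q J := keyA t _ _ (hb J) _ (hQd J)
  set pI : I → ℝ := Qd I *ᵥ restr q I with hpI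
  classical
  -- extension of pI by zero
  set g : N → ℝ := fun n => if h : n ∈ I then pI ⟨n, h⟩ else 0 with hg
  set y : J → ℝ := fun j => g j.1 with hy
  have hgI : ∀ i : I, g i.1 = pI i := by
    intro i; rw [hg]; simp
  have hg0 : ∀ n, n ∉ I → g n = 0 := by
    intro n hn; rw [hg]; simp [hn]
  -- eq1 : restr q J ⬝ᵥ y = restr q I ⬝ᵥ pI
  have eq1 : restr q J ⬝ᵥ y = restr q I ⬝ᵥ pI := by
    have hJside : restr q J ⬝ᵥ y = ∑ n ∈ J, q n * g n := by
      rw [dotProduct]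
      exact Finset.sum_coe_sort J (fun n => q n * g n)
    have hIside : restr q I ⬝ᵥ pI = ∑ n ∈ I, q n * g n := by
      rw [dotProduct]
      have : ∀ i : I, restr q I i * pI i = q i.1 * g i.1 := by
        intro i; rw [hgI i]; rfl
      rw [Finset.sum_congr rfl (fun i _ => this i)]
      exact Finset.sum_coe_sort I (fun n => q n * g n)
    rw [hJside, hIside]
    refine (Finset.sum_subset hIJ ?_).symm
    intro n _ hnI
    rw [hg0 n hnI, mul_zero]
  -- eq2 : y ⬝ᵥ (subm Q J) *ᵥ y = pI ⬝ᵥ (subm Q I) *ᵥ pI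
  set F : N → N → ℝ := fun a b => g a * (Q a b * g b) with hF
  have eq2 : y ⬝ᵥ subm Q J *ᵥ y = pI ⬝ᵥ subm Q I *ᵥ pI := by
    have hJside : y ⬝ᵥ subm Q J *ᵥ y = ∑ a ∈ J, ∑ b ∈ J, F a b := by
      rw [dotProduct]
      have : ∀ a : J, y a * (subm Q J *ᵥ y) a = ∑ b ∈ J, F a.1 b := by
        intro a
        rw [mulVec, dotProduct, Finset.mul_sum]
        rw [← Finset.sum_coe_sort J (fun b => F a.1 b)]
        exact Finset.sum_congr rfl (fun b _ => rfl)
      rw [Finset.sum_congr rfl (fun a _ => this a)]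
      exact Finset.sum_coe_sort J (fun a => ∑ b ∈ J, F a b)
    have hIside : pI ⬝ᵥ subm Q I *ᵥ pI = ∑ a ∈ I, ∑ b ∈ I, F a b := by
      rw [dotProduct]
      have : ∀ a : I, pI a * (subm Q I *ᵥ pI) a = ∑ b ∈ I, F a.1 b := by
        intro a
        rw [mulVec, dotProduct, Finset.mul_sum]
        rw [← Finset.sum_coe_sort I (fun b => F a.1 b)]
        refine Finset.sum_congr rfl (fun b _ => ?_)
        rw [hF]
        dsimp only
        rw [hgI a, hgI b]
        rfl
      rw [Finset.sum_congr rfl (fun a _ => this a)]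
      exact Finset.sum_coe_sort I (fun a => ∑ b ∈ I, F a b)
    rw [hJside, hIside]
    have step1 : ∀ a ∈ J, (∑ b ∈ I, F a b) = ∑ b ∈ J, F a b := by
      intro a _
      refine Finset.sum_subset hIJ ?_
      intro b _ hbI
      rw [hF]; dsimp only; rw [hg0 b hbI, mul_zero, mul_zero]
    have step2 : (∑ a ∈ I, ∑ b ∈ I, F a b) = ∑ a ∈ J, ∑ b ∈ I, F a b := by
      refine Finset.sum_subset hIJ ?_
      intro a _ haI
      refine Finset.sum_eq_zero (fun b _ => ?_)
      rw [hF]; dsimp only; rw [hg0 a haI, zero_mul]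
    rw [step2]
    exact (Finset.sum_congr rfl step1).symm
  -- assemble
  have hVI : pI ⬝ᵥ subm Q I *ᵥ pI = restr q I ⬝ᵥ pI := by
    rw [hAI, dotProduct_comm]
  have hkB := keyB (restr q J) (subm Q J) (hQS J) (Qd J) hAJ y
  rw [eq1, eq2, hVI] at hkB
  linarith
end

section
/- Constructing an optimal dual SDP certificate from an LP clique cover: let μ* : C(G) → ℝ≥0 satisfy Σ_{C ∋ i} μ*_C ≥ w_i for all i ∈ N. Define, for each clique C, the vector p_C ∈ ℝ^{{0}∪N} with [p_C]_0 = √(μ*_C), [p_C]_i = −√(μ*_C) for i ∈ C, and 0 otherwise, and the vector b ∈ ℝ^{{0}∪N} with b_0 = 0 and b_i = Σ_{C ∋ i} μ*_C − w_i for i ∈ N. Then M := Σ_{C ∈ C(G)} p_C p_C^⊤ + Diag(b) is positive semidefinite, has M_00 = Σ_C μ*_C, satisfies M_{ij} = 0 for all non-adjacent distinct i, j ∈ N, and writing M = [[t, p^⊤],[p, P]] one has P_ii = −2 p_i − w_i for every i ∈ N. -/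
open Matrix Finset

set_option maxHeartbeats 1000000

variable {N : Type*} [Fintype N] [DecidableEq N]

/-- The vector `p_C` associated to a clique `C`. -/
noncomputable def pvec (μ : Finset N → ℝ) (C : Finset N) : Unit ⊕ N → ℝ :=
  Sum.elim (fun _ => Real.sqrt (μ C)) (fun i => if i ∈ C then -Real.sqrt (μ C) else 0)

open scoped Classical in
/-- The diagonal vector `b`. -/
noncomputable def bvec (G : SimpleGraph N) (μ : Finset N → ℝ) (w : N → ℝ) : Unit ⊕ N → ℝ :=
  Sum.elim (fun _ => 0)
    (fun i => (∑ C ∈ Finset.univ.filter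
        (fun C : Finset N => G.IsClique (C : Set N) ∧ i ∈ C), μ C) - w i)

open scoped Classical in
/-- The matrix `M = Σ_C p_C p_Cᵀ + Diag(b)`. -/
noncomputable def Mmat (G : SimpleGraph N) (μ : Finset N → ℝ) (w : N → ℝ) :
    Matrix (Unit ⊕ N) (Unit ⊕ N) ℝ :=
  (∑ C ∈ Finset.univ.filter (fun C : Finset N => G.IsClique (C : Set N)),
      Matrix.vecMulVec (pvec μ C) (pvec μ C)) + Matrix.diagonal (bvec G μ w)

lemma vecMulVec_self_posSemidef {n : Type*} [Fintype n] (v : n → ℝ) :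
    (Matrix.vecMulVec v v).PosSemidef := by
  rw [Matrix.posSemidef_iff_dotProduct_mulVec]
  constructor
  · ext i j
    simp [Matrix.vecMulVec_apply, Matrix.conjTranspose_apply, mul_comm]
  · intro x
    have h : star x ⬝ᵥ (Matrix.vecMulVec v v *ᵥ x) = (v ⬝ᵥ x) * (v ⬝ᵥ x) := by
      simp [Matrix.mulVec, Matrix.vecMulVec_apply, dotProduct, Finset.mul_sum,
        Finset.sum_mul, mul_assoc]
      rw [Finset.sum_comm]
      ring_nf
      congr 1; ext i; congr 1; ext j; ring
    rw [h]
    exact mul_self_nonneg _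

open scoped Classical in
/-- Constructing an optimal dual SDP certificate from a feasible LP clique cover. -/
theorem Mmat_dual_feasible (G : SimpleGraph N) (w : N → ℝ) (hw : ∀ i, 0 < w i)
    (μ : Finset N → ℝ) (hμ : ∀ C, 0 ≤ μ C)
    (hfeas : ∀ i : N, w i ≤
      ∑ C ∈ Finset.univ.filter (fun C : Finset N => G.IsClique (C : Set N) ∧ i ∈ C), μ C) :
    (Mmat G μ w).PosSemidef ∧
    Mmat G μ w (Sum.inl ()) (Sum.inl ()) =
      ∑ C ∈ Finset.univ.filter (fun C : Finset N => G.IsClique (C : Set N)), μ C ∧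
    (∀ i j : N, i ≠ j → ¬ G.Adj i j → Mmat G μ w (Sum.inr i) (Sum.inr j) = 0) ∧
    (∀ i : N, Mmat G μ w (Sum.inr i) (Sum.inr i) =
      -2 * Mmat G μ w (Sum.inl ()) (Sum.inr i) - w i) := by
  refine ⟨?_, ?_, ?_, ?_⟩
  · -- PSD
    apply Matrix.PosSemidef.add
    · apply Finset.sum_induction _ Matrix.PosSemidef
        (fun a b ha hb => ha.add hb) (Matrix.PosSemidef.zero)
      intro C _
      exact vecMulVec_self_posSemidef _
    · rw [Matrix.posSemidef_diagonal_iff]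
      rintro (u | i)
      · simp [bvec]
      · simpa [bvec] using hfeas i
  · -- M_00
    simp only [Mmat, Matrix.add_apply, Matrix.sum_apply, Matrix.vecMulVec_apply,
      Matrix.diagonal_apply_eq, pvec, Sum.elim_inl, bvec]
    rw [add_zero]
    exact Finset.sum_congr rfl fun C _ => Real.mul_self_sqrt (hμ C)
  · -- off-diagonal non-edges
    intro i j hij hadj
    have hd : Matrix.diagonal (bvec G μ w) (Sum.inr i) (Sum.inr j) = 0 :=
      Matrix.diagonal_apply_ne _ (by simp [hij])
    simp only [Mmat, Matrix.add_apply, Matrix.sum_apply, Matrix.vecMulVec_apply, hd, add_zero,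
      pvec, Sum.elim_inr]
    apply Finset.sum_eq_zero
    intro C hC
    simp only [Finset.mem_filter] at hC
    by_cases hi : i ∈ C
    · by_cases hj : j ∈ C
      · exact absurd (hC.2 hi hj hij) hadj
      · simp [hi, hj]
    · simp [hi]
  · -- diagonal entries
    intro i
    have hd : Matrix.diagonal (bvec G μ w) (Sum.inl ()) (Sum.inr i) = 0 :=
      Matrix.diagonal_apply_ne _ (by simp)
    simp only [Mmat, Matrix.add_apply, Matrix.sum_apply, Matrix.vecMulVec_apply,
      Matrix.diagonal_apply_eq, hd, add_zero, pvec, Sum.elim_inl, Sum.elim_inr, bvec]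
    have h1 : ∀ S : Finset (Finset N),
        ∑ C ∈ S, (if i ∈ C then -Real.sqrt (μ C) else 0) *
          (if i ∈ C then -Real.sqrt (μ C) else 0)
        = ∑ C ∈ S.filter (fun C => i ∈ C), μ C := by
      intro S
      rw [Finset.sum_filter]
      apply Finset.sum_congr rfl
      intro C _
      by_cases hi : i ∈ C
      · simp [hi, Real.mul_self_sqrt (hμ C)]
      · simp [hi]
    have h2 : ∀ S : Finset (Finset N),
        ∑ C ∈ S, Real.sqrt (μ C) * (if i ∈ C then -Real.sqrt (μ C) else 0)
        = -∑ C ∈ S.filter (fun C => i ∈ C), μ C := by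
      intro S
      rw [← Finset.sum_neg_distrib, Finset.sum_filter]
      apply Finset.sum_congr rfl
      intro C _
      by_cases hi : i ∈ C
      · simp [hi, Real.mul_self_sqrt (hμ C)]
      · simp [hi]
    rw [h1, h2]
    have hfe : (Finset.univ.filter (fun C : Finset N => G.IsClique (C : Set N))).filter
        (fun C => i ∈ C) =
        Finset.univ.filter (fun C : Finset N => G.IsClique (C : Set N) ∧ i ∈ C) := by
      rw [Finset.filter_filter]
    rw [hfe, Matrix.diagonal_apply_ne _ (show (Sum.inl () : Unit ⊕ N) ≠ Sum.inr i by simp)]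
    ring
end

section
/- One-step monotone extension of VFA equality certificates: if V is a tight VFA (V(N) = α(N)) for a graph G, then for any run of the greedy procedure that repeatedly selects a vertex i from the remaining set I and replaces I by I \ ({i} ∪ δ_i), if at every selection step V(I) = V(I \ ({i} ∪ δ_i)) + w_i holds, then the set of selected vertices at termination is a maximum weight stable set of G. -/
open Finset

variable {V : Type*}

lemma delVtx_subset [Fintype V] [DecidableEq V] (G : SimpleGraph V) [DecidableRel G.Adj]
    (S : Finset V) (i : V) : delVtx G S i ⊆ S := Finset.sdiff_subset

lemma foldl_del_subset [Fintype V] [DecidableEq V] (G : SimpleGraph V) [DecidableRel G.Adj] :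
    ∀ (L : List V) (S : Finset V), L.foldl (delVtx G) S ⊆ S
  | [], _ => subset_rfl
  | a :: l, S => (foldl_del_subset G l _).trans (delVtx_subset G S a)

/-- Greedy run with stepwise VFA equalities from a tight VFA returns a maximum
weight stable set. -/
theorem greedy_tight_vfa_optimal [Fintype V] [DecidableEq V] (G : SimpleGraph V)
    [DecidableRel G.Adj] (w : V → ℝ) (hw : ∀ i, 0 < w i)
    (Vfa : Finset V → ℝ) (hV : IsVFA G w Vfa)
    (htight : Vfa Finset.univ = alphaW G w Finset.univ)
    (L : List V)
    (hstep : ∀ t : Fin L.length,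
      L.get t ∈ (L.take t).foldl (delVtx G) Finset.univ ∧
      Vfa ((L.take t).foldl (delVtx G) Finset.univ) =
        Vfa (delVtx G ((L.take t).foldl (delVtx G) Finset.univ) (L.get t)) + w (L.get t))
    (hterm : L.foldl (delVtx G) Finset.univ = ∅) :
    (∀ i ∈ L.toFinset, ∀ j ∈ L.toFinset, ¬ G.Adj i j) ∧
    (∑ i ∈ L.toFinset, w i) = alphaW G w Finset.univ := by
  classical
  set I : ℕ → Finset V := fun t => (L.take t).foldl (delVtx G) Finset.univ with hI
  have hIsucc : ∀ t : Fin L.length, I (t + 1) = delVtx G (I t) (L.get t) := by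
    intro t
    have h1 : L.take (t + 1) = L.take t ++ [L.get t] := by
      rw [List.take_succ, List.getElem?_eq_getElem t.isLt]
      simp
    simp only [hI, h1, List.foldl_append, List.foldl_cons, List.foldl_nil]
  have hImono : ∀ s t : ℕ, s ≤ t → I t ⊆ I s := by
    intro s t hst
    have h1 : L.take t = L.take s ++ (L.take t).drop s := by
      conv_lhs => rw [← List.take_append_drop s (L.take t)]
      rw [List.take_take, min_eq_left hst]
    show (L.take t).foldl (delVtx G) Finset.univ ⊆ (L.take s).foldl (delVtx G) Finset.univ
    rw [h1, List.foldl_append]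
    exact foldl_del_subset G _ _
  -- telescope
  have htel : ∀ k, k ≤ L.length → Vfa (I k) + ((L.take k).map w).sum = Vfa Finset.univ := by
    intro k hk
    induction k with
    | zero => simp [hI]
    | succ n ih =>
      have hn : n < L.length := hk
      have h1 : L.take (n + 1) = L.take n ++ [L.get ⟨n, hn⟩] := by
        rw [List.take_succ, List.getElem?_eq_getElem hn]
        simp
      have h2 := (hstep ⟨n, hn⟩).2
      have h3 := hIsucc ⟨n, hn⟩
      rw [h1, List.map_append, List.sum_append]
      have := ih (le_of_lt hn)
      simp only [List.map_cons, List.map_nil, List.sum_cons, List.sum_nil, add_zero]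
      have h4 : Vfa (I (n + 1)) = Vfa (I n) - w (L.get ⟨n, hn⟩) := by
        rw [h3]
        simp only [hI] at h2 ⊢
        linarith
      rw [h4]
      linarith
  have hIlen : I L.length = ∅ := by simp [hI, hterm]
  have hsum : (L.map w).sum = Vfa Finset.univ := by
    have := htel L.length le_rfl
    rw [hIlen, hV.2.1, List.take_length] at this
    linarith
  -- distinctness
  have hne : ∀ s t : Fin L.length, (s : ℕ) < t → L.get t ∈ I (t : ℕ) ∧ L.get t ≠ L.get s ∧
      L.get t ∉ G.neighborFinset (L.get s) := by
    intro s t hst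
    have hmem : L.get t ∈ I (t : ℕ) := (hstep t).1
    have hsub : I (t : ℕ) ⊆ I ((s : ℕ) + 1) := hImono _ _ hst
    have : L.get t ∈ delVtx G (I s) (L.get s) := by
      rw [← hIsucc s]; exact hsub hmem
    rw [delVtx, Finset.mem_sdiff, Finset.mem_insert] at this
    push_neg at this
    exact ⟨hmem, this.2.1, this.2.2⟩
  have hnodup : L.Nodup := by
    rw [List.nodup_iff_injective_get]
    intro s t h
    by_contra hne'
    rcases lt_or_gt_of_ne (fun h' : s = t => hne' h') with h1 | h1
    · exact (hne s t h1).2.1 h.symm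
    · exact (hne t s h1).2.1 h
  constructor
  · intro i hi j hj
    rw [List.mem_toFinset] at hi hj
    obtain ⟨s, rfl⟩ := List.mem_iff_get.mp hi
    obtain ⟨t, rfl⟩ := List.mem_iff_get.mp hj
    rcases lt_trichotomy (s : ℕ) (t : ℕ) with h1 | h1 | h1
    · intro hadj
      exact (hne s t h1).2.2 ((G.mem_neighborFinset _ _).mpr hadj)
    · have : s = t := Fin.ext h1
      subst this
      exact G.irrefl
    · intro hadj
      exact (hne t s h1).2.2 ((G.mem_neighborFinset _ _).mpr hadj.symm)
  · rw [← htight, ← hsum]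
    exact List.sum_toFinset w hnodup
end

section
/- Chain inequality from the VFA property: if V is a VFA and S* = {v_1, …, v_s} ⊆ I is a stable set of G contained in I, then V(I) ≥ Σ_{k=1}^{s} w_{v_k} + V(I \ (S* ∪ δ_{S*})), where δ_{S*} is the set of neighbors of vertices in S*. -/
open Finset

variable {V : Type*}

/-- Chain inequality: removing a stable set `S*` together with its neighborhood
`δ_{S*}` costs at least its total weight. -/
theorem vfa_chain_inequality [Fintype V] [DecidableEq V] (G : SimpleGraph V)
    [DecidableRel G.Adj] (w : V → ℝ) (hw : ∀ i, 0 < w i)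
    (Vfa : Finset V → ℝ) (hV : IsVFA G w Vfa)
    (I Sstar : Finset V) (hsub : Sstar ⊆ I)
    (hstable : ∀ a ∈ Sstar, ∀ b ∈ Sstar, ¬ G.Adj a b) :
    (∑ v ∈ Sstar, w v) +
      Vfa (I \ (Sstar ∪ ((Sstar.biUnion fun v => G.neighborFinset v) \ Sstar))) ≤ Vfa I := by
  classical
  rw [Finset.union_sdiff_self_eq_union]
  induction Sstar using Finset.induction_on with
  | empty => simp
  | @insert v S hvS ih =>
    have hsubS : S ⊆ I := fun x hx => hsub (Finset.mem_insert_of_mem hx)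
    have hstS : ∀ a ∈ S, ∀ b ∈ S, ¬ G.Adj a b := fun a ha b hb =>
      hstable a (Finset.mem_insert_of_mem ha) b (Finset.mem_insert_of_mem hb)
    have IH := ih hsubS hstS
    set A := I \ (S ∪ S.biUnion fun v => G.neighborFinset v) with hA
    have hvA : v ∈ A := by
      simp only [hA, Finset.mem_sdiff, Finset.mem_union, Finset.mem_biUnion,
        SimpleGraph.mem_neighborFinset]
      refine ⟨hsub (Finset.mem_insert_self v S), ?_⟩
      rintro (hvS' | ⟨u, hu, hadj⟩)
      · exact hvS hvS'
      · exact hstable u (Finset.mem_insert_of_mem hu) v (Finset.mem_insert_self v S) hadj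
    have hkey := hV.2.2.2 A v hvA
    have hdel : delVtx G A v =
        I \ (insert v S ∪ (insert v S).biUnion fun v => G.neighborFinset v) := by
      ext x
      simp only [delVtx, hA, Finset.mem_sdiff, Finset.mem_union, Finset.mem_insert,
        Finset.mem_biUnion, SimpleGraph.mem_neighborFinset, Finset.biUnion_insert]
      aesop
    rw [Finset.sum_insert hvS]
    rw [hdel] at hkey
    linarith
end
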